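/- Let f ∈ ℓ^∞_m(ℤ²) with m > 2 and Σ_{x∈ℤ²} f(x) = 0. Then there exists a universal constant c₀ > 1 such that for all x ∈ ℤ², |(Φ₀ ∗ f)(x)| ≤ (c₀^m/(m−2)⁴) ‖f‖_{ℓ^∞_m} (e+|x|)^{(2−m)/(m+1)} (ln(e+|x|))^{1/(m+1)}. -/

import Mathlib

noncomputable def latticeNorm (x : ℤ × ℤ) : ℝ :=
  Real.sqrt ((x.1 : ℝ) ^ 2 + (x.2 : ℝ) ^ 2)

def latticeLap (u : ℤ × ℤ → ℝ) (x : ℤ × ℤ) : ℝ :=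
  (u (x.1 + 1, x.2) - u x) + (u (x.1 - 1, x.2) - u x) +
    (u (x.1, x.2 + 1) - u x) + (u (x.1, x.2 - 1) - u x)

noncomputable def gamma₀ : ℝ :=
  (1 / Real.pi) * (Real.eulerMascheroniConstant + Real.log 2 / 2)

/-!
Write `X = e + |x|` and `θ = (m - 2) / (m + 1)`; the bound holds even without the logarithmic
factor, which is `≥ 1`. The asymptotics give `|Φ₀ z| ≤ A log (e + |z|)` on all of `ℤ²`. While
`X ^ θ` stays below a constant depending only on `Φ₀`, summing this crude bound against
`|f y| ≤ N (1 + |y|) ^ (-m)` gives `O(log X) = O(X ^ (-θ))`. Beyond that, `∑ f = 0` lets us replace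
`Φ₀ (y - x)` by `Φ₀ (y - x) - Φ₀ (-x)`: for `|y| ≤ r = X ^ (1 - θ)` the asymptotics make this
`O(r / X) = O(X ^ (-θ))`, and for `|y| > r` the decay of `f` yields a factor `r ^ (-(m - 2) / 2)`
that beats `log X`. Lattice sums are controlled by `∑ (1 + |y|) ^ (-s) ≤ ((s + 2) / (s - 2)) ^ 2`,
the source of the factor `(m - 2) ^ (-4)`, and `D m ^ 4 ≤ (e ^ 2 D) ^ m` absorbs the rest into
`c₀ ^ m`.
-/

open Real Set

namespace GreenConvolution

noncomputable def toEuclidean : ℤ × ℤ →+ EuclideanSpace ℝ (Fin 2) where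
  toFun x := !₂[(x.1 : ℝ), x.2]
  map_zero' := by ext i; fin_cases i <;> simp
  map_add' a b := by ext i; fin_cases i <;> simp

lemma latticeNorm_eq_norm (x : ℤ × ℤ) : latticeNorm x = ‖toEuclidean x‖ := by
  simp [latticeNorm, toEuclidean, EuclideanSpace.norm_eq, Fin.sum_univ_two]

lemma latticeNorm_nonneg (x : ℤ × ℤ) : 0 ≤ latticeNorm x := sqrt_nonneg _

@[simp] lemma latticeNorm_zero : latticeNorm 0 = 0 := by simp [latticeNorm]

@[simp] lemma latticeNorm_neg (x : ℤ × ℤ) : latticeNorm (-x) = latticeNorm x := by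
  simp [latticeNorm_eq_norm]

lemma latticeNorm_sub_le (a b : ℤ × ℤ) : latticeNorm (a - b) ≤ latticeNorm a + latticeNorm b := by
  simpa only [latticeNorm_eq_norm, map_sub] using norm_sub_le _ _

lemma abs_latticeNorm_sub_latticeNorm_le (a b : ℤ × ℤ) :
    |latticeNorm a - latticeNorm b| ≤ latticeNorm (a - b) := by
  simpa only [latticeNorm_eq_norm, map_sub] using abs_norm_sub_norm_le _ _

lemma abs_fst_le_latticeNorm (x : ℤ × ℤ) : |(x.1 : ℝ)| ≤ latticeNorm x :=
  abs_le_sqrt (by nlinarith [sq_nonneg (x.2 : ℝ)])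

lemma abs_snd_le_latticeNorm (x : ℤ × ℤ) : |(x.2 : ℝ)| ≤ latticeNorm x :=
  abs_le_sqrt (by nlinarith [sq_nonneg (x.1 : ℝ)])

lemma one_add_abs_mul_one_add_abs_le (x : ℤ × ℤ) :
    (1 + |(x.1 : ℝ)|) * (1 + |(x.2 : ℝ)|) ≤ (1 + latticeNorm x) ^ 2 := by
  have hsq : latticeNorm x ^ 2 = (x.1 : ℝ) ^ 2 + (x.2 : ℝ) ^ 2 := sq_sqrt (by positivity)
  nlinarith [sq_abs (x.1 : ℝ), sq_abs (x.2 : ℝ), sq_nonneg (|(x.1 : ℝ)| - |(x.2 : ℝ)|),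
    abs_fst_le_latticeNorm x, abs_snd_le_latticeNorm x]

lemma finite_setOf_latticeNorm_le (R : ℝ) : {z : ℤ × ℤ | latticeNorm z ≤ R}.Finite := by
  refine (ProperSpace.isCompact_closedBall (0 : ℤ × ℤ) R).finite_of_discrete.subset fun z hz ↦ ?_
  simp only [Metric.mem_closedBall, dist_zero_right, Prod.norm_def, Int.norm_eq_abs, sup_le_iff]
  exact ⟨(abs_fst_le_latticeNorm z).trans hz, (abs_snd_le_latticeNorm z).trans hz⟩

lemma summable_nat_add_rpow_neg {s : ℝ} (hs : 1 < s) (k : ℕ) :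
    Summable fun n : ℕ ↦ ((n + k : ℕ) : ℝ) ^ (-s) :=
  (summable_nat_add_iff k).mpr (summable_nat_rpow.mpr (by linarith))

lemma tsum_nat_add_two_rpow_neg_le {s : ℝ} (hs : 1 < s) :
    ∑' n : ℕ, ((n + 2 : ℕ) : ℝ) ^ (-s) ≤ 1 / (s - 1) := by
  have hanti : AntitoneOn (fun t : ℝ ↦ t ^ (-s)) (Ici ((1 : ℕ) : ℝ)) := fun a ha b _ hab ↦
    rpow_le_rpow_of_nonpos (by simp at ha; linarith) hab (by linarith)
  have hint := hanti.tsum_comp_add_le_integral 1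
    (by simpa using integrableOn_Ioi_rpow_of_lt (by linarith : -s < -1) one_pos)
    (fun t ht ↦ rpow_nonneg (by simp at ht; linarith) _)
  rw [Nat.cast_one, integral_Ioi_rpow_of_lt (by linarith) one_pos] at hint
  convert hint using 1
  rw [one_rpow, show -s + 1 = -(s - 1) by ring, div_neg, neg_div, neg_neg]

lemma one_add_abs_natCast_rpow (s : ℝ) (n : ℕ) :
    (1 + |((n : ℤ) : ℝ)|) ^ s = ((n + 1 : ℕ) : ℝ) ^ s := by
  push_cast; rw [abs_of_nonneg (by positivity), add_comm]

lemma one_add_abs_neg_natCast_rpow (s : ℝ) (n : ℕ) :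
    (1 + |((-((n : ℤ) + 1) : ℤ) : ℝ)|) ^ s = ((n + 2 : ℕ) : ℝ) ^ s := by
  push_cast; rw [abs_neg, abs_of_nonneg (by positivity)]; ring_nf

lemma summable_int_one_add_abs_rpow_neg {s : ℝ} (hs : 1 < s) :
    Summable fun k : ℤ ↦ (1 + |(k : ℝ)|) ^ (-s) := by
  exact .of_nat_of_neg_add_one
    ((summable_nat_add_rpow_neg hs 1).congr fun n ↦ (one_add_abs_natCast_rpow _ n).symm)
    ((summable_nat_add_rpow_neg hs 2).congr fun n ↦ (one_add_abs_neg_natCast_rpow _ n).symm)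

lemma tsum_int_one_add_abs_rpow_neg_le {s : ℝ} (hs : 1 < s) :
    ∑' k : ℤ, (1 + |(k : ℝ)|) ^ (-s) ≤ (s + 1) / (s - 1) := by
  have h1 := summable_nat_add_rpow_neg hs 1
  rw [tsum_of_nat_of_neg_add_one (h1.congr fun n ↦ (one_add_abs_natCast_rpow _ n).symm)
    ((summable_nat_add_rpow_neg hs 2).congr fun n ↦ (one_add_abs_neg_natCast_rpow _ n).symm)]
  simp only [one_add_abs_natCast_rpow, one_add_abs_neg_natCast_rpow]
  rw [h1.tsum_eq_zero_add, zero_add, Nat.cast_one, one_rpow]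
  have hT := tsum_nat_add_two_rpow_neg_le hs
  have hs1 : s - 1 ≠ 0 := by linarith
  rw [show (s + 1) / (s - 1) = 1 + 2 * (1 / (s - 1)) by field_simp; ring]
  linarith

lemma one_add_latticeNorm_rpow_neg_le {s : ℝ} (hs : 0 ≤ s) (y : ℤ × ℤ) :
    (1 + latticeNorm y) ^ (-s) ≤
      (1 + |(y.1 : ℝ)|) ^ (-(s / 2)) * (1 + |(y.2 : ℝ)|) ^ (-(s / 2)) := by
  rw [← mul_rpow (by positivity) (by positivity),
    show -s = 2 * -(s / 2) by ring, rpow_mul (by linarith [latticeNorm_nonneg y]), rpow_two]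
  exact rpow_le_rpow_of_nonpos (by positivity) (one_add_abs_mul_one_add_abs_le y) (by linarith)

lemma summable_one_add_latticeNorm_rpow_neg {s : ℝ} (hs : 2 < s) :
    Summable fun y : ℤ × ℤ ↦ (1 + latticeNorm y) ^ (-s) := by
  have h := summable_int_one_add_abs_rpow_neg (s := s / 2) (by linarith)
  exact .of_nonneg_of_le (fun y ↦ rpow_nonneg (by linarith [latticeNorm_nonneg y]) _)
    (one_add_latticeNorm_rpow_neg_le (by linarith))
    (h.mul_of_nonneg h (fun _ ↦ by positivity) fun _ ↦ by positivity)

lemma tsum_one_add_latticeNorm_rpow_neg_le {s : ℝ} (hs : 2 < s) :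
    ∑' y : ℤ × ℤ, (1 + latticeNorm y) ^ (-s) ≤ ((s + 2) / (s - 2)) ^ 2 := by
  have h := summable_int_one_add_abs_rpow_neg (s := s / 2) (by linarith)
  have hprod := h.mul_of_nonneg h (fun _ ↦ by positivity) fun _ ↦ by positivity
  have h1 := tsum_int_one_add_abs_rpow_neg_le (s := s / 2) (by linarith)
  calc ∑' y : ℤ × ℤ, (1 + latticeNorm y) ^ (-s)
      ≤ ∑' y : ℤ × ℤ, (1 + |(y.1 : ℝ)|) ^ (-(s / 2)) * (1 + |(y.2 : ℝ)|) ^ (-(s / 2)) :=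
        (summable_one_add_latticeNorm_rpow_neg hs).tsum_le_tsum
          (one_add_latticeNorm_rpow_neg_le (by linarith)) hprod
    _ = (∑' k : ℤ, (1 + |(k : ℝ)|) ^ (-(s / 2))) ^ 2 := by rw [sq, h.tsum_mul_tsum h hprod]
    _ ≤ ((s / 2 + 1) / (s / 2 - 1)) ^ 2 := by gcongr
    _ = ((s + 2) / (s - 2)) ^ 2 := by
      rw [show s / 2 + 1 = (s + 2) / 2 by ring, show s / 2 - 1 = (s - 2) / 2 by ring,
        div_div_div_cancel_right₀ two_ne_zero]

lemma summable_of_abs_le_weight {g : ℤ × ℤ → ℝ} {K s : ℝ} (hs : 2 < s)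
    (hg : ∀ y, |g y| ≤ K * (1 + latticeNorm y) ^ (-s)) : Summable g :=
  .of_norm_bounded ((summable_one_add_latticeNorm_rpow_neg hs).mul_left K) hg

lemma abs_tsum_le_of_abs_le_weight {g : ℤ × ℤ → ℝ} {K s : ℝ} (hs : 2 < s)
    (hg : ∀ y, |g y| ≤ K * (1 + latticeNorm y) ^ (-s)) :
    |∑' y, g y| ≤ K * ((s + 2) / (s - 2)) ^ 2 := by
  have hK : 0 ≤ K := by simpa using (abs_nonneg _).trans (hg 0)
  calc |∑' y, g y| ≤ ∑' y, K * (1 + latticeNorm y) ^ (-s) := by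
        rw [← Real.norm_eq_abs]
        exact tsum_of_norm_bounded ((summable_one_add_latticeNorm_rpow_neg hs).mul_left K).hasSum hg
    _ ≤ K * ((s + 2) / (s - 2)) ^ 2 := by
      rw [tsum_mul_left]; gcongr; exact tsum_one_add_latticeNorm_rpow_neg_le hs

lemma abs_log_sub_log_le {a b c : ℝ} (hc : 0 < c) (ha : c ≤ a) (hb : c ≤ b) :
    |log a - log b| ≤ |a - b| / c := by
  have key : ∀ u v, c ≤ u → c ≤ v → log u - log v ≤ |u - v| / c := fun u v hu hv ↦ by
    have hv0 : 0 < v := hc.trans_le hv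
    calc log u - log v = log (u / v) := (log_div (by linarith) hv0.ne').symm
      _ ≤ u / v - 1 := log_le_sub_one_of_pos (div_pos (by linarith) hv0)
      _ = (u - v) / v := by field_simp
      _ ≤ |u - v| / c := div_le_div₀ (abs_nonneg _) (le_abs_self _) hc hv
  refine abs_le.mpr ⟨?_, key a b ha hb⟩
  linarith [abs_sub_comm a b ▸ key b a hb ha]

lemma one_div_two_mul_pi_le_one : 1 / (2 * π) ≤ 1 := by
  rw [div_le_one (by positivity)]; linarith [pi_gt_three]

lemma one_le_log_exp_one_add {u : ℝ} (hu : 0 ≤ u) : 1 ≤ log (exp 1 + u) := by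
  simpa using log_le_log (exp_pos 1) (le_add_of_nonneg_right hu)

lemma log_exp_one_add_le_add {a b c : ℝ} (ha : 0 ≤ a) (hb : 0 ≤ b) (hc : 0 ≤ c)
    (hcab : c ≤ a + b) : log (exp 1 + c) ≤ log (exp 1 + a) + log (exp 1 + b) := by
  have he : 1 ≤ exp 1 := one_le_exp zero_le_one
  rw [← log_mul (by positivity) (by positivity)]
  exact log_le_log (by positivity) (by nlinarith)

lemma log_exp_one_add_le_mul_rpow {u δ : ℝ} (hu : 0 ≤ u) (hδ : 0 < δ) :
    log (exp 1 + u) ≤ (1 + 1 / δ) * (1 + u) ^ δ := by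
  have he : 1 ≤ exp 1 := one_le_exp zero_le_one
  have hpow : 1 ≤ (1 + u) ^ δ := one_le_rpow (by linarith) hδ.le
  calc log (exp 1 + u) ≤ log (exp 1 * (1 + u)) := log_le_log (by positivity) (by nlinarith)
    _ = 1 + log (1 + u) := by rw [log_mul (by positivity) (by positivity), log_exp]
    _ ≤ 1 + (1 + u) ^ δ / δ := by gcongr; exact log_le_rpow_div (by positivity) hδ
    _ ≤ (1 + 1 / δ) * (1 + u) ^ δ := by rw [add_mul, one_mul, one_div_mul_eq_div]; linarith

lemma log_mul_rpow_neg_le {X θ κ : ℝ} (hX : 0 < X) (hκ : 0 < κ) :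
    log X * X ^ (-(θ + κ)) ≤ X ^ (-θ) / κ :=
  calc log X * X ^ (-(θ + κ)) ≤ X ^ κ / κ * X ^ (-(θ + κ)) := by
        gcongr; exact log_le_rpow_div hX.le hκ
    _ = X ^ (-θ) / κ := by
      rw [div_mul_eq_mul_div, ← rpow_add hX]; ring_nf

lemma log_le_of_rpow_le {X θ L : ℝ} (hX : 1 ≤ X) (hθ : 0 < θ) (hXL : X ^ θ ≤ L) :
    log X ≤ L ^ 2 / θ * X ^ (-θ) := by
  have hXθ : 1 ≤ X ^ θ := one_le_rpow hX hθ.le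
  have hlog : θ * log X ≤ L := by
    rw [← log_rpow (by linarith)]
    exact (log_le_sub_one_of_pos (by linarith)).trans (by linarith)
  have hL : 1 ≤ L * X ^ (-θ) := by
    rw [rpow_neg (by linarith), ← div_eq_mul_inv, le_div_iff₀ (by linarith), one_mul]
    exact hXL
  calc log X ≤ L / θ * 1 := by rw [mul_one, le_div_iff₀ hθ, mul_comm]; exact hlog
    _ ≤ L / θ * (L * X ^ (-θ)) := mul_le_mul_of_nonneg_left hL (div_nonneg (by linarith) hθ.le)
    _ = L ^ 2 / θ * X ^ (-θ) := by ring

lemma mul_pow_four_le_rpow {D m : ℝ} (hD : 1 ≤ D) (hm : 1 ≤ m) :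
    D * m ^ 4 ≤ (exp 2 * D) ^ m := by
  have hm_exp : m ≤ exp (m / 2) := by
    nlinarith [quadratic_le_exp_of_nonneg (by linarith : 0 ≤ m / 2), sq_nonneg (m / 2 - 1)]
  have hm4 : m ^ 4 ≤ exp 2 ^ m := by
    calc m ^ 4 ≤ exp (m / 2) ^ 4 := by gcongr
      _ = exp 2 ^ m := by rw [← exp_nat_mul, ← exp_mul]; ring_nf
  rw [mul_rpow (exp_pos 2).le (by linarith), mul_comm (exp 2 ^ m)]
  gcongr
  simpa using rpow_le_rpow_of_exponent_le hD hm

lemma add_div_sub_two_le {m a c : ℝ} (hm : 2 < m) (h : m + a ≤ c * m) :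
    (m + a) / (m - 2) ≤ c * (m / (m - 2)) := by
  rw [mul_div_assoc']; gcongr

lemma three_add_four_div_sub_two_le {m : ℝ} (hm : 2 < m) :
    3 + 4 / (m - 2) ≤ 3 * (m / (m - 2)) := by
  have hm2 : m - 2 ≠ 0 := by linarith
  rw [show 3 + 4 / (m - 2) = (m + (2 * m - 2)) / (m - 2) by field_simp; ring]
  exact add_div_sub_two_le hm (by linarith)

def HasLogAsymptotics (Φ : ℤ × ℤ → ℝ) (C R κ : ℝ) : Prop :=
  ∀ x, R ≤ latticeNorm x → |Φ x + 1 / (2 * π) * log (latticeNorm x) + κ| ≤ C / latticeNorm x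

section Asymptotics

variable {Φ : ℤ × ℤ → ℝ} {C R κ : ℝ}

lemma exists_abs_le_mul_log (hC : 0 ≤ C) (hΦ : HasLogAsymptotics Φ C R κ) :
    ∃ A, 0 ≤ A ∧ ∀ z, |Φ z| ≤ A * log (exp 1 + latticeNorm z) := by
  obtain ⟨M, hM⟩ := ((finite_setOf_latticeNorm_le (max R 1)).image fun z ↦ |Φ z|).bddAbove
  refine ⟨max M 0 + C + |κ| + 1, by positivity, fun z ↦ ?_⟩
  have hz0 := latticeNorm_nonneg z
  have hlog := one_le_log_exp_one_add hz0
  have hA : max M 0 + C + |κ| + 1 ≤ (max M 0 + C + |κ| + 1) * log (exp 1 + latticeNorm z) :=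
    le_mul_of_one_le_right (by positivity) hlog
  rcases le_or_gt (latticeNorm z) (max R 1) with hz | hz
  · have := hM (mem_image_of_mem _ hz)
    linarith [le_max_left M 0, abs_nonneg κ]
  · have hz1 : 1 ≤ latticeNorm z := (le_max_right _ _).trans hz.le
    have hasymp := abs_le.mp (hΦ z ((le_max_left _ _).trans hz.le))
    have hCz : C / latticeNorm z ≤ C := div_le_self hC hz1
    have hlogz : 0 ≤ log (latticeNorm z) := log_nonneg hz1
    have hlogz' : log (latticeNorm z) ≤ log (exp 1 + latticeNorm z) :=
      log_le_log (by linarith) (by linarith [exp_pos 1])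
    have hc : 1 / (2 * π) * log (latticeNorm z) ≤ log (latticeNorm z) :=
      mul_le_of_le_one_left hlogz one_div_two_mul_pi_le_one
    have hc0 : 0 ≤ 1 / (2 * π) * log (latticeNorm z) := by positivity
    rw [abs_le]
    constructor <;> nlinarith [le_abs_self κ, neg_abs_le κ, le_max_right M 0]

lemma abs_sub_le_of_asymp (hC : 0 ≤ C) (hΦ : HasLogAsymptotics Φ C R κ)
    {a b : ℤ × ℤ} {ρ : ℝ} (hρ : 0 < ρ) (hRρ : R ≤ ρ) (ha : ρ ≤ latticeNorm a)
    (hb : ρ ≤ latticeNorm b) :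
    |Φ a - Φ b| ≤ (2 * C + |latticeNorm a - latticeNorm b|) / ρ := by
  have hCa : C / latticeNorm a ≤ C / ρ := div_le_div_of_nonneg_left hC hρ ha
  have hCb : C / latticeNorm b ≤ C / ρ := div_le_div_of_nonneg_left hC hρ hb
  have hlog : |1 / (2 * π) * (log (latticeNorm a) - log (latticeNorm b))| ≤
      |latticeNorm a - latticeNorm b| / ρ := by
    rw [abs_mul, abs_of_pos (by positivity)]
    exact (mul_le_of_le_one_left (abs_nonneg _) one_div_two_mul_pi_le_one).trans
      (abs_log_sub_log_le hρ ha hb)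
  have hEa := abs_le.mp ((hΦ a (hRρ.trans ha)).trans hCa)
  have hEb := abs_le.mp ((hΦ b (hRρ.trans hb)).trans hCb)
  have hL := abs_le.mp hlog
  rw [add_div, abs_le, mul_div_assoc, two_mul]
  constructor <;> linarith

end Asymptotics

section Convolution

variable {Φ f : ℤ × ℤ → ℝ} {A C R κ m N : ℝ}

lemma abs_le_mul_rpow_neg (hf : ∀ x, |f x| * (1 + latticeNorm x) ^ m ≤ N) (y : ℤ × ℤ) :
    |f y| ≤ N * (1 + latticeNorm y) ^ (-m) := by
  have hy : 0 < 1 + latticeNorm y := by linarith [latticeNorm_nonneg y]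
  rw [rpow_neg hy.le, ← div_eq_mul_inv, le_div_iff₀ (rpow_pos_of_pos hy m)]
  exact hf y

lemma nonneg_of_abs_le_mul_rpow_neg (hf : ∀ y, |f y| ≤ N * (1 + latticeNorm y) ^ (-m)) :
    0 ≤ N := by
  simpa using (abs_nonneg _).trans (hf 0)

lemma abs_green_add_abs_green_le (hA0 : 0 ≤ A)
    (hA : ∀ z, |Φ z| ≤ A * log (exp 1 + latticeNorm z)) {δ : ℝ} (hδ : 0 < δ) (x y : ℤ × ℤ) :
    |Φ (y - x)| + |Φ (-x)| ≤
      A * (3 + 1 / δ) * log (exp 1 + latticeNorm x) * (1 + latticeNorm y) ^ δ := by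
  have hx := latticeNorm_nonneg x
  have hy := latticeNorm_nonneg y
  have hlogx := one_le_log_exp_one_add hx
  have hpow : 1 ≤ (1 + latticeNorm y) ^ δ := one_le_rpow (by linarith) hδ.le
  have hlogyx : log (exp 1 + latticeNorm (y - x)) ≤
      log (exp 1 + latticeNorm y) + log (exp 1 + latticeNorm x) :=
    log_exp_one_add_le_add hy hx (latticeNorm_nonneg _) (latticeNorm_sub_le y x)
  have hlogy := log_exp_one_add_le_mul_rpow hy hδ
  have h1 := hA (y - x)
  have h2 := hA (-x)
  rw [latticeNorm_neg] at h2
  have hδ' : 0 ≤ 1 / δ := by positivity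
  calc |Φ (y - x)| + |Φ (-x)|
      ≤ A * (2 * log (exp 1 + latticeNorm x) + (1 + 1 / δ) * (1 + latticeNorm y) ^ δ) := by
        nlinarith
    _ ≤ A * (3 + 1 / δ) * log (exp 1 + latticeNorm x) * (1 + latticeNorm y) ^ δ := by
        rw [mul_assoc A, mul_assoc A]
        gcongr
        nlinarith [mul_nonneg (sub_nonneg.2 hlogx) (sub_nonneg.2 hpow),
          mul_nonneg hδ' (mul_nonneg (sub_nonneg.2 hlogx) (zero_le_one.trans hpow))]

lemma abs_mul_le_of_abs_le_abs_green_add (hA0 : 0 ≤ A)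
    (hA : ∀ z, |Φ z| ≤ A * log (exp 1 + latticeNorm z)) (hm : 2 < m)
    (hf : ∀ y, |f y| ≤ N * (1 + latticeNorm y) ^ (-m)) {a : ℝ} {x y : ℤ × ℤ}
    (ha : |a| ≤ |Φ (y - x)| + |Φ (-x)|) :
    |a * f y| ≤ A * (3 + 4 / (m - 2)) * N * log (exp 1 + latticeNorm x) *
      (1 + latticeNorm y) ^ (-((m - 2) / 2)) * (1 + latticeNorm y) ^ (-((m + 6) / 4)) := by
  have hΦ := abs_green_add_abs_green_le hA0 hA (δ := (m - 2) / 4) (by linarith) x y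
  rw [one_div_div] at hΦ
  have hy : 0 < 1 + latticeNorm y := by linarith [latticeNorm_nonneg y]
  have hsplit : (1 + latticeNorm y) ^ ((m - 2) / 4) * (1 + latticeNorm y) ^ (-m) =
      (1 + latticeNorm y) ^ (-((m - 2) / 2)) * (1 + latticeNorm y) ^ (-((m + 6) / 4)) := by
    rw [← rpow_add hy, ← rpow_add hy]; ring_nf
  calc |a * f y|
      ≤ (A * (3 + 4 / (m - 2)) * log (exp 1 + latticeNorm x) *
          (1 + latticeNorm y) ^ ((m - 2) / 4)) * (N * (1 + latticeNorm y) ^ (-m)) := by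
        rw [abs_mul]
        exact mul_le_mul (ha.trans hΦ) (hf y) (abs_nonneg _) ((abs_nonneg _).trans (ha.trans hΦ))
    _ = _ := by linear_combination A * (3 + 4 / (m - 2)) * log (exp 1 + latticeNorm x) * N * hsplit

lemma abs_tsum_green_mul_le_of_rpow_le (hA0 : 0 ≤ A)
    (hA : ∀ z, |Φ z| ≤ A * log (exp 1 + latticeNorm z)) (hm : 2 < m)
    (hf : ∀ y, |f y| ≤ N * (1 + latticeNorm y) ^ (-m)) {L : ℝ} (x : ℤ × ℤ)
    (hXL : (exp 1 + latticeNorm x) ^ ((m - 2) / (m + 1)) ≤ L) :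
    |∑' y, Φ (y - x) * f y| ≤ 384 * A * L ^ 2 * (m / (m - 2)) ^ 4 * N *
      (exp 1 + latticeNorm x) ^ (-((m - 2) / (m + 1))) := by
  set X := exp 1 + latticeNorm x
  set θ := (m - 2) / (m + 1) with hθ
  have hX1 : 1 ≤ X := by linarith [one_le_exp zero_le_one, latticeNorm_nonneg x]
  have hlogX : 0 ≤ log X := log_nonneg hX1
  have hN := nonneg_of_abs_le_mul_rpow_neg hf
  have hpt : ∀ y, |Φ (y - x) * f y| ≤
      A * (3 + 4 / (m - 2)) * N * log X * (1 + latticeNorm y) ^ (-((m + 6) / 4)) := fun y ↦ by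
    have hy : 1 ≤ 1 + latticeNorm y := by linarith [latticeNorm_nonneg y]
    refine (abs_mul_le_of_abs_le_abs_green_add hA0 hA hm hf
      (le_add_of_nonneg_right (abs_nonneg _))).trans ?_
    conv_rhs => rw [← mul_one (_ * log X)]
    gcongr
    exact rpow_le_one_of_one_le_of_nonpos hy (by linarith)
  have hsum := abs_tsum_le_of_abs_le_weight (by linarith : 2 < (m + 6) / 4) hpt
  rw [show (m + 6) / 4 + 2 = (m + 14) / 4 by ring, show (m + 6) / 4 - 2 = (m - 2) / 4 by ring,
    div_div_div_cancel_right₀ four_ne_zero] at hsum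
  have hθ0 : 0 < θ := div_pos (by linarith) (by linarith)
  have hlog := log_le_of_rpow_le hX1 hθ0 hXL
  rw [hθ, div_div_eq_mul_div, mul_div_assoc] at hlog
  calc |∑' y, Φ (y - x) * f y| ≤ A * (3 + 4 / (m - 2)) * N * log X * ((m + 14) / (m - 2)) ^ 2 :=
        hsum
    _ ≤ A * (3 * (m / (m - 2))) * N * (L ^ 2 * (2 * (m / (m - 2))) * X ^ (-θ)) *
          (8 * (m / (m - 2))) ^ 2 := by
        gcongr
        · exact three_add_four_div_sub_two_le hm
        · exact hlog.trans (by gcongr; exact add_div_sub_two_le hm (by linarith))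
        · exact add_div_sub_two_le hm (by linarith)
    _ = 384 * A * L ^ 2 * (m / (m - 2)) ^ 4 * N * X ^ (-θ) := by ring

lemma abs_green_sub_green_le_of_latticeNorm_le (hC : 0 ≤ C) (hΦ : HasLogAsymptotics Φ C R κ)
    {x y : ℤ × ℤ} {r : ℝ} (hr : 1 ≤ r) (hrX : 8 * r ≤ exp 1 + latticeNorm x)
    (hRX : 2 * R ≤ exp 1 + latticeNorm x) (hy : latticeNorm y ≤ r) :
    |Φ (y - x) - Φ (-x)| ≤ (4 * C + 2) * r / (exp 1 + latticeNorm x) := by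
  set X := exp 1 + latticeNorm x
  have he : exp 1 < 3 := lt_trans exp_one_lt_d9 (by norm_num)
  have hdiff : |latticeNorm (y - x) - latticeNorm (-x)| ≤ r := by
    have h := abs_latticeNorm_sub_latticeNorm_le (y - x) (-x)
    rw [sub_neg_eq_add, sub_add_cancel] at h
    exact h.trans hy
  have hx3 : X - 3 ≤ latticeNorm (-x) := by rw [latticeNorm_neg]; linarith
  have hx : X / 2 ≤ latticeNorm (-x) := by linarith
  have hyx : X / 2 ≤ latticeNorm (y - x) := by linarith [(abs_le.mp hdiff).1]
  calc |Φ (y - x) - Φ (-x)|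
      ≤ (2 * C + |latticeNorm (y - x) - latticeNorm (-x)|) / (X / 2) :=
        abs_sub_le_of_asymp hC hΦ (by linarith) (by linarith) hyx hx
    _ ≤ (2 * C + r) / (X / 2) := by gcongr; linarith
    _ ≤ (4 * C + 2) * r / X := by
        rw [div_div_eq_mul_div]
        exact div_le_div_of_nonneg_right (by nlinarith) (by linarith)

lemma log_mul_rpow_one_sub_rpow_le {X : ℝ} (hX : 0 < X) (hm : 2 < m) :
    log X * (X ^ (1 - (m - 2) / (m + 1))) ^ (-((m - 2) / 2)) ≤
      X ^ (-((m - 2) / (m + 1))) * (2 * ((m + 1) / (m - 2))) := by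
  have hθ : 0 < (m - 2) / (m + 1) := div_pos (by linarith) (by linarith)
  rw [← rpow_mul hX.le, show (1 - (m - 2) / (m + 1)) * -((m - 2) / 2) =
    -((m - 2) / (m + 1) + (m - 2) / (m + 1) / 2) by field_simp; ring]
  convert log_mul_rpow_neg_le hX (half_pos hθ) using 1
  field_simp

lemma abs_green_sub_green_mul_le (hC : 0 ≤ C) (hΦ : HasLogAsymptotics Φ C R κ)
    (hA0 : 0 ≤ A) (hA : ∀ z, |Φ z| ≤ A * log (exp 1 + latticeNorm z)) (hm : 2 < m)
    (hf : ∀ y, |f y| ≤ N * (1 + latticeNorm y) ^ (-m)) {x : ℤ × ℤ} (hR : 0 ≤ R)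
    (hX : 4 * R + 8 ≤ (exp 1 + latticeNorm x) ^ ((m - 2) / (m + 1))) (y : ℤ × ℤ) :
    |(Φ (y - x) - Φ (-x)) * f y| ≤
      (4 * C + 2 + A * (3 + 4 / (m - 2)) * (2 * ((m + 1) / (m - 2)))) * N *
        (exp 1 + latticeNorm x) ^ (-((m - 2) / (m + 1))) *
          (1 + latticeNorm y) ^ (-((m + 6) / 4)) := by
  set X := exp 1 + latticeNorm x
  set θ := (m - 2) / (m + 1) with hθ
  have hX1 : 1 ≤ X := by linarith [one_le_exp zero_le_one, latticeNorm_nonneg x]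
  have hX0 : 0 < X := by linarith
  have hN := nonneg_of_abs_le_mul_rpow_neg hf
  have hy1 : 1 ≤ 1 + latticeNorm y := by linarith [latticeNorm_nonneg y]
  have hθ1 : θ ≤ 1 := (div_le_one (by linarith)).mpr (by linarith)
  have hXθ : X ^ θ ≤ X := by simpa using rpow_le_rpow_of_exponent_le hX1 hθ1
  set r := X ^ (1 - θ) with hr
  have hr1 : 1 ≤ r := one_le_rpow hX1 (by linarith)
  have hXr : X = r * X ^ θ := by rw [hr, ← rpow_add hX0, sub_add_cancel, rpow_one]
  have hm2 : 0 < m - 2 := by linarith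
  have hK : 0 ≤ A * (3 + 4 / (m - 2)) := by positivity
  have hq : 0 ≤ 2 * ((m + 1) / (m - 2)) := by positivity
  rcases le_or_gt (latticeNorm y) r with hy | hy
  · have hnear := abs_green_sub_green_le_of_latticeNorm_le hC hΦ (x := x) hr1
      (by nlinarith) (by linarith) hy
    rw [mul_div_assoc, hr, ← rpow_sub_one hX0.ne', sub_sub_cancel_left] at hnear
    calc |(Φ (y - x) - Φ (-x)) * f y|
        ≤ (4 * C + 2) * X ^ (-θ) * (N * (1 + latticeNorm y) ^ (-((m + 6) / 4))) := by
          rw [abs_mul]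
          gcongr
          exact (hf y).trans (by gcongr; linarith)
      _ = (4 * C + 2) * N * X ^ (-θ) * (1 + latticeNorm y) ^ (-((m + 6) / 4)) := by ring
      _ ≤ _ := by
          gcongr ?_ * _ * _ * _
          exact le_add_of_nonneg_right (mul_nonneg hK hq)
  · have hβ : (1 + latticeNorm y) ^ (-((m - 2) / 2)) ≤ r ^ (-((m - 2) / 2)) :=
      rpow_le_rpow_of_nonpos (by linarith) (by linarith) (by linarith)
    calc |(Φ (y - x) - Φ (-x)) * f y|
        ≤ A * (3 + 4 / (m - 2)) * N * log X *
            (1 + latticeNorm y) ^ (-((m - 2) / 2)) * (1 + latticeNorm y) ^ (-((m + 6) / 4)) :=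
          abs_mul_le_of_abs_le_abs_green_add hA0 hA hm hf (abs_sub _ _)
      _ = A * (3 + 4 / (m - 2)) * N * (log X * (1 + latticeNorm y) ^ (-((m - 2) / 2))) *
            (1 + latticeNorm y) ^ (-((m + 6) / 4)) := by ring
      _ ≤ A * (3 + 4 / (m - 2)) * N * (X ^ (-θ) * (2 * ((m + 1) / (m - 2)))) *
            (1 + latticeNorm y) ^ (-((m + 6) / 4)) := by
          gcongr _ * ?_ * _
          exact (mul_le_mul_of_nonneg_left hβ (log_nonneg hX1)).trans
            (log_mul_rpow_one_sub_rpow_le hX0 hm)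
      _ = A * (3 + 4 / (m - 2)) * (2 * ((m + 1) / (m - 2))) * N * X ^ (-θ) *
            (1 + latticeNorm y) ^ (-((m + 6) / 4)) := by ring
      _ ≤ _ := by
          gcongr ?_ * _ * _ * _
          exact le_add_of_nonneg_left (by linarith)

lemma tsum_mul_eq_tsum_sub_mul {ι : Type*} {g h : ι → ℝ} (c : ℝ) (hh : HasSum h 0)
    (hg : Summable fun i ↦ (g i - c) * h i) : ∑' i, g i * h i = ∑' i, (g i - c) * h i := by
  have h := hg.hasSum.add (hh.mul_left c)
  rw [mul_zero, add_zero] at h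
  simp only [sub_mul, sub_add_cancel] at h ⊢
  exact h.tsum_eq

lemma abs_tsum_green_mul_le_of_le_rpow (hC : 0 ≤ C) (hΦ : HasLogAsymptotics Φ C R κ)
    (hA0 : 0 ≤ A) (hA : ∀ z, |Φ z| ≤ A * log (exp 1 + latticeNorm z)) (hm : 2 < m)
    (hf : ∀ y, |f y| ≤ N * (1 + latticeNorm y) ^ (-m)) (hf0 : HasSum f 0) {x : ℤ × ℤ}
    (hR : 0 ≤ R) (hX : 4 * R + 8 ≤ (exp 1 + latticeNorm x) ^ ((m - 2) / (m + 1))) :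
    |∑' y, Φ (y - x) * f y| ≤ 64 * (4 * C + 2 + 12 * A) * (m / (m - 2)) ^ 4 * N *
      (exp 1 + latticeNorm x) ^ (-((m - 2) / (m + 1))) := by
  have hpt := abs_green_sub_green_mul_le hC hΦ hA0 hA hm hf hR hX
  have hs : 2 < (m + 6) / 4 := by linarith
  rw [tsum_mul_eq_tsum_sub_mul _ hf0 (summable_of_abs_le_weight hs hpt)]
  have hsum := abs_tsum_le_of_abs_le_weight hs hpt
  rw [show (m + 6) / 4 + 2 = (m + 14) / 4 by ring, show (m + 6) / 4 - 2 = (m - 2) / 4 by ring,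
    div_div_div_cancel_right₀ four_ne_zero] at hsum
  have hq : 1 ≤ m / (m - 2) := (one_le_div (by linarith)).mpr (by linarith)
  have hN := nonneg_of_abs_le_mul_rpow_neg hf
  have hx := latticeNorm_nonneg x
  have hconst : 4 * C + 2 + A * (3 + 4 / (m - 2)) * (2 * ((m + 1) / (m - 2))) ≤
      (4 * C + 2 + 12 * A) * (m / (m - 2)) ^ 2 := by
    have h1 : A * (3 + 4 / (m - 2)) * (2 * ((m + 1) / (m - 2))) ≤
        A * (3 * (m / (m - 2))) * (2 * (2 * (m / (m - 2)))) := by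
      gcongr
      · exact three_add_four_div_sub_two_le hm
      · exact add_div_sub_two_le hm (by linarith)
    have h2 : 4 * C + 2 ≤ (4 * C + 2) * (m / (m - 2)) ^ 2 :=
      le_mul_of_one_le_right (by positivity) (one_le_pow₀ hq)
    nlinarith
  calc _ ≤ _ := hsum
    _ ≤ (4 * C + 2 + 12 * A) * (m / (m - 2)) ^ 2 * N *
          (exp 1 + latticeNorm x) ^ (-((m - 2) / (m + 1))) * (8 * (m / (m - 2))) ^ 2 := by
        gcongr
        exact add_div_sub_two_le hm (by linarith)
    _ = _ := by ring

lemma abs_tsum_green_mul_le (hC : 0 ≤ C) (hΦ : HasLogAsymptotics Φ C R κ)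
    (hA0 : 0 ≤ A) (hA : ∀ z, |Φ z| ≤ A * log (exp 1 + latticeNorm z)) (hR : 0 ≤ R) (hm : 2 < m)
    (hf : ∀ y, |f y| ≤ N * (1 + latticeNorm y) ^ (-m)) (hf0 : HasSum f 0) (x : ℤ × ℤ) :
    |∑' y, Φ (y - x) * f y| ≤
      (64 * (4 * C + 2 + 12 * A) + 384 * A * (4 * R + 8) ^ 2) * (m / (m - 2)) ^ 4 * N *
        (exp 1 + latticeNorm x) ^ (-((m - 2) / (m + 1))) := by
  have hN := nonneg_of_abs_le_mul_rpow_neg hf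
  have hx := latticeNorm_nonneg x
  rcases le_or_gt ((exp 1 + latticeNorm x) ^ ((m - 2) / (m + 1))) (4 * R + 8) with hX | hX
  · refine (abs_tsum_green_mul_le_of_rpow_le hA0 hA hm hf x hX).trans ?_
    gcongr
    exact le_add_of_nonneg_left (by positivity)
  · refine (abs_tsum_green_mul_le_of_le_rpow hC hΦ hA0 hA hm hf hf0 hR hX.le).trans ?_
    gcongr
    exact le_add_of_nonneg_right (by positivity)

end Convolution

end GreenConvolution

open GreenConvolution

theorem green_convolution_estimate_general (Φ₀ : ℤ × ℤ → ℝ)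
    (hasymp : ∃ C R : ℝ, 0 < C ∧ 0 < R ∧ ∀ x : ℤ × ℤ, R ≤ latticeNorm x →
      |Φ₀ x + (1 / (2 * Real.pi)) * Real.log (latticeNorm x) + gamma₀ / 2| ≤
        C / latticeNorm x) :
    ∃ c₀ : ℝ, 1 < c₀ ∧
      ∀ (m : ℝ), 2 < m → ∀ (f : ℤ × ℤ → ℝ) (N : ℝ),
        (∀ x, |f x| * (1 + latticeNorm x) ^ m ≤ N) →
        HasSum f 0 →
        ∀ x : ℤ × ℤ,
          |∑' y : ℤ × ℤ, Φ₀ (y - x) * f y| ≤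
            (c₀ ^ m / (m - 2) ^ 4) * N *
              (Real.exp 1 + latticeNorm x) ^ ((2 - m) / (m + 1)) *
              (Real.log (Real.exp 1 + latticeNorm x)) ^ (1 / (m + 1)) := by
  obtain ⟨C, R, hC, hR, hΦ⟩ := hasymp
  obtain ⟨A, hA0, hA⟩ := exists_abs_le_mul_log hC.le hΦ
  set D := 64 * (4 * C + 2 + 12 * A) + 384 * A * (4 * R + 8) ^ 2 with hD_def
  have hD : 1 ≤ D := by rw [hD_def]; nlinarith [sq_nonneg (4 * R + 8)]
  refine ⟨exp 2 * D, one_lt_mul_of_lt_of_le (one_lt_exp_iff.mpr two_pos) hD,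
    fun m hm f N hfN hf0 x ↦ ?_⟩
  have hf := abs_le_mul_rpow_neg hfN
  have hN := nonneg_of_abs_le_mul_rpow_neg hf
  have hx := latticeNorm_nonneg x
  have hlog : 1 ≤ log (exp 1 + latticeNorm x) ^ (1 / (m + 1)) :=
    one_le_rpow (one_le_log_exp_one_add hx) (by positivity)
  calc |∑' y, Φ₀ (y - x) * f y|
      ≤ D * m ^ 4 / (m - 2) ^ 4 * N * (exp 1 + latticeNorm x) ^ ((2 - m) / (m + 1)) := by
        rw [mul_div_assoc, ← div_pow, show (2 - m) / (m + 1) = -((m - 2) / (m + 1)) by ring]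
        exact abs_tsum_green_mul_le hC.le hΦ hA0 hA hR.le hm hf hf0 x
    _ ≤ _ := by
        rw [← mul_one (_ * _ * (exp 1 + latticeNorm x) ^ _)]
        gcongr
        exact mul_pow_four_le_rpow hD (by linarith)

/-- Pointwise decay estimate for `Φ₀ ∗ f` when `f ∈ ℓ^∞_m(ℤ²)`, `m > 2`, has
vanishing total sum. -/
theorem green_convolution_estimate (Φ₀ : ℤ × ℤ → ℝ)
    (hΦeq : ∀ x : ℤ × ℤ, -latticeLap Φ₀ x = if x = (0, 0) then 1 else 0)
    (hΦ0 : Φ₀ (0, 0) = 0)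
    (hasymp : ∃ C R : ℝ, 0 < C ∧ 0 < R ∧ ∀ x : ℤ × ℤ, R ≤ latticeNorm x →
      |Φ₀ x + (1 / (2 * Real.pi)) * Real.log (latticeNorm x) + gamma₀ / 2| ≤
        C / latticeNorm x) :
    ∃ c₀ : ℝ, 1 < c₀ ∧
      ∀ (m : ℝ), 2 < m → ∀ (f : ℤ × ℤ → ℝ) (N : ℝ),
        (∀ x, |f x| * (1 + latticeNorm x) ^ m ≤ N) →
        HasSum f 0 →
        ∀ x : ℤ × ℤ,
          |∑' y : ℤ × ℤ, Φ₀ (y - x) * f y| ≤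
            (c₀ ^ m / (m - 2) ^ 4) * N *
              (Real.exp 1 + latticeNorm x) ^ ((2 - m) / (m + 1)) *
              (Real.log (Real.exp 1 + latticeNorm x)) ^ (1 / (m + 1)) :=
  green_convolution_estimate_general Φ₀ hasymp
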